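/- For all n ∈ ℕ, all i with 0 ≤ i ≤ 2^n - 1 and gcd(i, 2^n) ≤ 2^{n-2}, and all choices x, y_0, y_1 ∈ {t_n, t̄_n}, the similarity density SD(x, (y_0 y_1)[i .. i + 2^n - 1]) lies in [1/4, 3/4]. -/

import Mathlib

def mu (l : List ℕ) : List ℕ := l.flatMap (fun b => [b, 1 - b])
def tWord (n : ℕ) : List ℕ := mu^[n] [0]
def comp (l : List ℕ) : List ℕ := l.map (fun b => 1 - b)

/-- Similarity density of two finite words (of the same length). -/
noncomputable def SD (x y : List ℕ) : ℝ :=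
  (List.zipWith (fun a b => if a = b then (1 : ℝ) else 0) x y).sum / x.length

/-!
Encode a letter `b` by the spin `1 - 2b = ±1`. For binary words of length `L` the number of
agreeing positions is `(L + Σ spin x_j · spin w_j) / 2`, so the claim is that this correlation
is at most `2^(n-1)` in absolute value. The spins of `t_n` are `e(k) = (-1)^(s₂ k)`, and the
window of `y₀ y₁` at offset `i` reads, up to a global sign, either `e` itself (when `y₁ = ȳ₀`,
so that `y₀ y₁` continues the Thue–Morse pattern) or its `2^n`-periodic extension (when
`y₁ = y₀`). Both families satisfy `g(2k) = g(k)`, `g(2k+1) = -g(k)`, so the correlations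
`C_n(i) = Σ_{j < 2^n} e(j) g(i + j)` obey `C_{n+1}(2i) = 2 C_n(i)` and
`C_{n+1}(2i+1) = -(C_n(i) + C_n(i+1))`. Induction on `n` with the trivial bound
`|C_n| ≤ 2^n` in the odd case gives `|C_{n+1}(i)| ≤ 2^n` whenever `2^n ∤ i`, which is exactly
what the gcd condition guarantees.
-/

open Finset

def tmSign (k : ℕ) : ℤ := (-1) ^ (Nat.digits 2 k).sum

lemma tmSign_two_mul (k : ℕ) : tmSign (2 * k) = tmSign k := by
  rcases Nat.eq_zero_or_pos k with rfl | hk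
  · rfl
  · rw [tmSign, Nat.digits_def' (by norm_num) (by omega)]
    simp [tmSign]

lemma tmSign_two_mul_add_one (k : ℕ) : tmSign (2 * k + 1) = -tmSign k := by
  rw [tmSign, Nat.digits_def' (by norm_num) (by omega)]
  simp [tmSign, show (2 * k + 1) / 2 = k by omega, pow_add]

lemma abs_tmSign (k : ℕ) : |tmSign k| = 1 := by simp [tmSign]

lemma tmSign_two_pow_add {n r : ℕ} (hr : r < 2 ^ n) : tmSign (2 ^ n + r) = -tmSign r := by
  induction n generalizing r with
  | zero =>
    obtain rfl : r = 0 := by simpa using hr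
    rfl
  | succ n ih =>
    obtain ⟨k, rfl | rfl⟩ := Nat.even_or_odd' r
    · rw [pow_succ, mul_comm, ← mul_add, tmSign_two_mul, tmSign_two_mul, ih (by omega)]
    · rw [pow_succ, mul_comm, ← add_assoc, ← mul_add, tmSign_two_mul_add_one,
        tmSign_two_mul_add_one, ih (by omega)]

structure IsThueMorseFamily (f : ℕ → ℕ → ℤ) : Prop where
  abs_eq_one : ∀ n m, |f n m| = 1
  two_mul : ∀ n k, f (n + 1) (2 * k) = f n k
  two_mul_add_one : ∀ n k, f (n + 1) (2 * k + 1) = -f n k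

lemma isThueMorseFamily_tmSign : IsThueMorseFamily fun _ => tmSign :=
  ⟨fun _ => abs_tmSign, fun _ => tmSign_two_mul, fun _ => tmSign_two_mul_add_one⟩

lemma isThueMorseFamily_tmSign_mod : IsThueMorseFamily fun n m => tmSign (m % 2 ^ n) where
  abs_eq_one _ _ := abs_tmSign _
  two_mul n k := by rw [pow_succ', Nat.mul_mod_mul_left, tmSign_two_mul]
  two_mul_add_one n k := by
    have : (2 * k + 1) % (2 * 2 ^ n) = 2 * (k % 2 ^ n) + 1 := by
      rw [Nat.mod_mul, show (2 * k + 1) / 2 = k by omega]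
      omega
    rw [pow_succ', this, tmSign_two_mul_add_one]

def corr (f : ℕ → ℕ → ℤ) (n i : ℕ) : ℤ := ∑ j ∈ range (2 ^ n), tmSign j * f n (i + j)

lemma sum_range_two_mul {M : Type*} [AddCommMonoid M] (g : ℕ → M) (m : ℕ) :
    ∑ j ∈ range (2 * m), g j = ∑ k ∈ range m, (g (2 * k) + g (2 * k + 1)) := by
  induction m with
  | zero => simp
  | succ m ih =>
    rw [mul_add, mul_one, sum_range_succ, sum_range_succ, sum_range_succ, ih, add_assoc]

section corr

variable {f : ℕ → ℕ → ℤ} (hf : IsThueMorseFamily f)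
include hf

lemma corr_two_mul (n i : ℕ) : corr f (n + 1) (2 * i) = 2 * corr f n i := by
  rw [corr, pow_succ', sum_range_two_mul, corr, mul_sum]
  refine sum_congr rfl fun k _ => ?_
  rw [← mul_add, show 2 * i + (2 * k + 1) = 2 * (i + k) + 1 by ring, hf.two_mul,
    hf.two_mul_add_one, tmSign_two_mul, tmSign_two_mul_add_one]
  ring

lemma corr_two_mul_add_one (n i : ℕ) :
    corr f (n + 1) (2 * i + 1) = -(corr f n i + corr f n (i + 1)) := by
  rw [corr, pow_succ', sum_range_two_mul, corr, corr, ← sum_add_distrib, ← sum_neg_distrib]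
  refine sum_congr rfl fun k _ => ?_
  rw [show 2 * i + 1 + 2 * k = 2 * (i + k) + 1 by ring,
    show 2 * i + 1 + (2 * k + 1) = 2 * (i + 1 + k) by ring, hf.two_mul, hf.two_mul_add_one,
    tmSign_two_mul, tmSign_two_mul_add_one]
  ring

lemma abs_corr_le (n i : ℕ) : |corr f n i| ≤ 2 ^ n := by
  calc |corr f n i| ≤ ∑ j ∈ range (2 ^ n), |tmSign j * f n (i + j)| := abs_sum_le_sum_abs _ _
    _ ≤ ∑ j ∈ range (2 ^ n), 1 := by
      gcongr with j
      rw [abs_mul, abs_tmSign, hf.abs_eq_one, one_mul]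
    _ = 2 ^ n := by simp

lemma abs_corr_add_corr_succ_le (n i : ℕ) :
    |corr f (n + 1) i + corr f (n + 1) (i + 1)| ≤ 2 ^ (n + 1) := by
  obtain ⟨k, rfl | rfl⟩ := Nat.even_or_odd' i
  · rw [corr_two_mul hf, corr_two_mul_add_one hf, pow_succ]
    calc |2 * corr f n k + -(corr f n k + corr f n (k + 1))|
        = |corr f n k - corr f n (k + 1)| := by ring_nf
      _ ≤ |corr f n k| + |corr f n (k + 1)| := abs_sub _ _
      _ ≤ 2 ^ n * 2 := by linarith [abs_corr_le hf n k, abs_corr_le hf n (k + 1)]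
  · rw [show 2 * k + 1 + 1 = 2 * (k + 1) by ring, corr_two_mul hf, corr_two_mul_add_one hf,
      pow_succ]
    calc |-(corr f n k + corr f n (k + 1)) + 2 * corr f n (k + 1)|
        = |corr f n (k + 1) - corr f n k| := by ring_nf
      _ ≤ |corr f n (k + 1)| + |corr f n k| := abs_sub _ _
      _ ≤ 2 ^ n * 2 := by linarith [abs_corr_le hf n k, abs_corr_le hf n (k + 1)]

lemma abs_corr_le_of_not_dvd {n i : ℕ} (hi : ¬ 2 ^ n ∣ i) : |corr f (n + 1) i| ≤ 2 ^ n := by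
  induction n generalizing i with
  | zero => simp at hi
  | succ n ih =>
    obtain ⟨k, rfl | rfl⟩ := Nat.even_or_odd' i
    · rw [corr_two_mul hf, abs_mul, pow_succ', abs_two]
      have hk : ¬ 2 ^ n ∣ k := fun h => hi (by rw [pow_succ']; exact mul_dvd_mul_left 2 h)
      linarith [ih hk]
    · rw [corr_two_mul_add_one hf, abs_neg]
      exact abs_corr_add_corr_succ_le hf n k

end corr

def spin (l : List ℕ) (m : ℕ) : ℤ := 1 - 2 * (l.getD m 0 : ℤ)

lemma length_mu (l : List ℕ) : (mu l).length = 2 * l.length := by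
  induction l with
  | nil => rfl
  | cons a l ih => simp [mu] at ih ⊢; omega

lemma getD_mu_two_mul (l : List ℕ) (k : ℕ) : (mu l).getD (2 * k) 0 = l.getD k 0 := by
  induction l generalizing k with
  | nil => rfl
  | cons a l ih =>
    cases k with
    | zero => rfl
    | succ k => simpa [mu, mul_add] using ih k

lemma getD_mu_two_mul_add_one {l : List ℕ} {k : ℕ} (hk : k < l.length) :
    (mu l).getD (2 * k + 1) 0 = 1 - l.getD k 0 := by
  induction l generalizing k with
  | nil => simp at hk
  | cons a l ih =>
    cases k with
    | zero => rfl
    | succ k => simpa [mu, mul_add] using ih (by simpa using hk)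

lemma tWord_succ (n : ℕ) : tWord (n + 1) = mu (tWord n) :=
  Function.iterate_succ_apply' ..

lemma length_tWord (n : ℕ) : (tWord n).length = 2 ^ n := by
  induction n with
  | zero => rfl
  | succ n ih => rw [tWord_succ, length_mu, ih, pow_succ']

lemma getD_le_one_of_abs_spin {l : List ℕ} {m : ℕ} (h : |spin l m| = 1) : l.getD m 0 ≤ 1 := by
  rw [spin, abs_eq zero_le_one] at h
  omega

lemma spin_tWord {n m : ℕ} (hm : m < 2 ^ n) : spin (tWord n) m = tmSign m := by
  induction n generalizing m with
  | zero =>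
    obtain rfl : m = 0 := by simpa using hm
    rfl
  | succ n ih =>
    obtain ⟨k, rfl | rfl⟩ := Nat.even_or_odd' m
    · rw [spin, tWord_succ, getD_mu_two_mul, tmSign_two_mul, ← ih (by omega), spin]
    · have hk : k < 2 ^ n := by omega
      have hle := getD_le_one_of_abs_spin (by rw [ih hk, abs_tmSign])
      rw [spin, tWord_succ, getD_mu_two_mul_add_one (by rwa [length_tWord]),
        tmSign_two_mul_add_one, ← ih hk, spin, Nat.cast_sub hle]
      ring

lemma spin_comp {l : List ℕ} {m : ℕ} (hm : m < l.length) (hle : l.getD m 0 ≤ 1) :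
    spin (comp l) m = -spin l m := by
  rw [spin, spin, comp, List.getD_eq_getElem _ _ (by simpa using hm), List.getElem_map,
    ← List.getD_eq_getElem _ 0, Nat.cast_sub hle]
  ring

lemma spin_take_drop {l : List ℕ} {i k j : ℕ} (hj : j < k) :
    spin ((l.drop i).take k) j = spin l (i + j) := by
  simp [spin, List.getD_eq_getElem?_getD, hj]

lemma exists_spin_eq_of_tWord_or_comp {n : ℕ} {y : List ℕ}
    (hy : y = tWord n ∨ y = comp (tWord n)) :
    ∃ s : ℤ, |s| = 1 ∧ y.length = 2 ^ n ∧ ∀ m < 2 ^ n, spin y m = s * tmSign m := by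
  rcases hy with rfl | rfl
  · exact ⟨1, abs_one, length_tWord n, fun m hm => by rw [one_mul, spin_tWord hm]⟩
  · refine ⟨-1, by simp, by rw [comp, List.length_map, length_tWord], fun m hm => ?_⟩
    have hlen : m < (tWord n).length := by rwa [length_tWord]
    rw [spin_comp hlen (getD_le_one_of_abs_spin (by rw [spin_tWord hm, abs_tmSign])),
      spin_tWord hm, neg_one_mul]

lemma exists_isThueMorseFamily_spin_window {n i : ℕ} {y0 y1 : List ℕ} {s0 s1 : ℤ}
    (hi : i < 2 ^ n) (hs : |s1| = |s0|) (h0 : y0.length = 2 ^ n) (h1 : y1.length = 2 ^ n)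
    (hy0 : ∀ m < 2 ^ n, spin y0 m = s0 * tmSign m) (hy1 : ∀ m < 2 ^ n, spin y1 m = s1 * tmSign m) :
    ∃ f, IsThueMorseFamily f ∧ (((y0 ++ y1).drop i).take (2 ^ n)).length = 2 ^ n ∧
      ∀ j < 2 ^ n, spin (((y0 ++ y1).drop i).take (2 ^ n)) j = s0 * f n (i + j) := by
  have hlen : (((y0 ++ y1).drop i).take (2 ^ n)).length = 2 ^ n := by simp [h0, h1]; omega
  have happend : ∀ m < 2 ^ n + 2 ^ n,
      spin (y0 ++ y1) m = if m < 2 ^ n then s0 * tmSign m else s1 * tmSign (m - 2 ^ n) := by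
    intro m hm
    split_ifs with h
    · rw [spin, List.getD_append _ _ _ _ (by omega), ← spin, hy0 m h]
    · rw [spin, List.getD_append_right _ _ _ _ (by omega), h0, ← spin, hy1 _ (by omega)]
  rcases abs_eq_abs.1 hs with rfl | rfl
  · refine ⟨_, isThueMorseFamily_tmSign_mod, hlen, fun j hj => ?_⟩
    rw [spin_take_drop hj, happend _ (by omega)]
    split_ifs with h
    · rw [Nat.mod_eq_of_lt h]
    · rw [Nat.mod_eq_sub_mod (by omega), Nat.mod_eq_of_lt (by omega)]
  · refine ⟨_, isThueMorseFamily_tmSign, hlen, fun j hj => ?_⟩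
    rw [spin_take_drop hj, happend _ (by omega)]
    split_ifs with h
    · rfl
    · rw [← neg_neg (tmSign (i + j)), show i + j = 2 ^ n + (i + j - 2 ^ n) by omega,
        tmSign_two_pow_add (by omega), Nat.add_sub_cancel_left]
      ring

lemma sum_zipWith_eq_sum_range {M : Type*} [AddCommMonoid M] (f : ℕ → ℕ → M) :
    ∀ x w : List ℕ, x.length = w.length →
      (List.zipWith f x w).sum = ∑ j ∈ range x.length, f (x.getD j 0) (w.getD j 0)
  | [], [], _ => rfl
  | a :: x, b :: w, h => by
    rw [List.zipWith_cons_cons, List.sum_cons, sum_zipWith_eq_sum_range f x w (by simpa using h),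
      List.length_cons, sum_range_succ']
    simp only [List.getD_cons_succ, List.getD_cons_zero]
    exact add_comm _ _

lemma ite_eq_eq_one_add_spin_mul_spin_div_two {x w : List ℕ} {j : ℕ} (hx : |spin x j| = 1)
    (hw : |spin w j| = 1) :
    (if x.getD j 0 = w.getD j 0 then (1 : ℝ) else 0) = (1 + (spin x j * spin w j : ℤ)) / 2 := by
  have hx' := getD_le_one_of_abs_spin hx
  have hw' := getD_le_one_of_abs_spin hw
  rw [spin, spin]
  interval_cases x.getD j 0 <;> interval_cases w.getD j 0 <;> norm_num

lemma SD_eq_of_abs_spin {x w : List ℕ} {L : ℕ} (hxlen : x.length = L) (hwlen : w.length = L)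
    (hx : ∀ j < L, |spin x j| = 1) (hw : ∀ j < L, |spin w j| = 1) :
    SD x w = (L + (∑ j ∈ range L, spin x j * spin w j : ℤ)) / (2 * L) := by
  rw [SD, sum_zipWith_eq_sum_range _ _ _ (hxlen.trans hwlen.symm), hxlen,
    sum_congr rfl fun j hj =>
      ite_eq_eq_one_add_spin_mul_spin_div_two (hx j (mem_range.1 hj)) (hw j (mem_range.1 hj)),
    ← sum_div, sum_add_distrib]
  push_cast
  rw [div_div, sum_const, card_range, nsmul_one]

lemma not_pow_dvd_of_four_mul_gcd_le {m i : ℕ}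
    (hg : 4 * Nat.gcd i (2 ^ (m + 1)) ≤ 2 ^ (m + 1)) : ¬ 2 ^ m ∣ i := by
  intro hdvd
  have hpos : 0 < Nat.gcd i (2 ^ (m + 1)) := Nat.gcd_pos_of_pos_right _ (by positivity)
  have := Nat.le_of_dvd hpos (Nat.dvd_gcd hdvd (pow_dvd_pow 2 m.le_succ))
  rw [pow_succ] at hg this
  omega

lemma add_div_two_mul_mem_Icc {L T : ℝ} (hL : 0 < L) (hT : |T| ≤ L / 2) :
    (L + T) / (2 * L) ∈ Set.Icc (1 / 4 : ℝ) (3 / 4) := by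
  rw [abs_le] at hT
  constructor
  · rw [le_div_iff₀ (by positivity)]
    linarith
  · rw [div_le_iff₀ (by positivity)]
    linarith

theorem technical_finite (n i : ℕ) (hi : i ≤ 2 ^ n - 1)
    (hg : 4 * Nat.gcd i (2 ^ n) ≤ 2 ^ n)
    (x y0 y1 : List ℕ)
    (hx : x = tWord n ∨ x = comp (tWord n))
    (hy0 : y0 = tWord n ∨ y0 = comp (tWord n))
    (hy1 : y1 = tWord n ∨ y1 = comp (tWord n)) :
    SD x (((y0 ++ y1).drop i).take (2 ^ n)) ∈ Set.Icc (1/4 : ℝ) (3/4) := by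
  obtain _ | m := n
  · simp at hg
  obtain ⟨sx, hsx, hxlen, hxspin⟩ := exists_spin_eq_of_tWord_or_comp hx
  obtain ⟨s0, hs0, h0len, h0spin⟩ := exists_spin_eq_of_tWord_or_comp hy0
  obtain ⟨s1, hs1, h1len, h1spin⟩ := exists_spin_eq_of_tWord_or_comp hy1
  obtain ⟨f, hf, hwlen, hwspin⟩ := exists_isThueMorseFamily_spin_window
    (Nat.lt_of_le_pred (by positivity) hi) (hs1.trans hs0.symm) h0len h1len h0spin h1spin
  set w := ((y0 ++ y1).drop i).take (2 ^ (m + 1))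
  have hsum : ∑ j ∈ range (2 ^ (m + 1)), spin x j * spin w j = sx * s0 * corr f (m + 1) i := by
    rw [corr, mul_sum]
    refine sum_congr rfl fun j hj => ?_
    rw [hxspin j (mem_range.1 hj), hwspin j (mem_range.1 hj)]
    ring
  have hcorr : |sx * s0 * corr f (m + 1) i| ≤ 2 ^ m := by
    rw [abs_mul, abs_mul, hsx, hs0, one_mul, one_mul]
    exact abs_corr_le_of_not_dvd hf (not_pow_dvd_of_four_mul_gcd_le hg)
  rw [SD_eq_of_abs_spin hxlen hwlen
    (fun j hj => by rw [hxspin j hj, abs_mul, hsx, abs_tmSign, one_mul])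
    (fun j hj => by rw [hwspin j hj, abs_mul, hs0, hf.abs_eq_one, one_mul]), hsum]
  refine add_div_two_mul_mem_Icc (by positivity) ?_
  rw [pow_succ, Nat.cast_mul, Nat.cast_two, mul_div_cancel_right₀ _ two_ne_zero]
  exact_mod_cast hcorr
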